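/- Let g, h, x ∈ H_n with x^{-1} g x = h and t_i(x) ≡ 0 (mod |t_i(g)|) for all i ∈ I(g) = {i : t_i(g) ≠ 0}. Then the equivalence relations ∼_g and ∼_h on {1,…,n} coincide. -/

import Mathlib

namespace HoughtonPaper

/-- The set `X_n = {1,…,n} × ℕ` (rays indexed by `Fin n`). -/
abbrev X (n : ℕ) := Fin n × ℕ

/-- `g` acts as the translation by `t i` on the ray `i` from the point `z` on. -/
def EvTransFrom {n : ℕ} (g : Equiv.Perm (X n)) (t : Fin n → ℤ) (z : ℕ) : Prop :=
  ∀ (i : Fin n) (m : ℕ), z ≤ m →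
    (g (i, m)).1 = i ∧ ((g (i, m)).2 : ℤ) = (m : ℤ) + t i

/-- `g` is eventually a translation with translation vector `t`. -/
def EvTrans {n : ℕ} (g : Equiv.Perm (X n)) (t : Fin n → ℤ) : Prop :=
  ∃ z : ℕ, EvTransFrom g t z

/-- Membership in Houghton's group `H_n`. -/
def InH {n : ℕ} (g : Equiv.Perm (X n)) : Prop :=
  ∃ t : Fin n → ℤ, EvTrans g t

/-- Support of a permutation. -/
def supp {α : Type*} (g : Equiv.Perm α) : Set α := {x | g x ≠ x}

/-- Membership in `FSym(X_n)`, the finitely supported permutations. -/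
def InFSym {n : ℕ} (g : Equiv.Perm (X n)) : Prop := (supp g).Finite

/-- Two sets are almost equal if their symmetric difference is finite. -/
def AlmostEq {α : Type*} (A B : Set α) : Prop := (symmDiff A B).Finite

/-- The set `X_{i,r}(g) = {(i,m) : m ≡ r mod |t_i(g)|}`, for `t` the translation vector. -/
def Xir {n : ℕ} (i : Fin n) (t : Fin n → ℤ) (r : ℕ) : Set (X n) :=
  {p : X n | p.1 = i ∧ p.2 % (t i).natAbs = r}

/-- Forward orbit `{(i,m)g^k : k ≥ 0}`. -/
def fwdOrbit {n : ℕ} (g : Equiv.Perm (X n)) (p : X n) : Set (X n) :=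
  Set.range fun k : ℕ => (g ^ k) p

/-- The orbit `{x g^k : k ∈ ℤ}`. -/
def orbit {n : ℕ} (g : Equiv.Perm (X n)) (p : X n) : Set (X n) :=
  Set.range fun k : ℤ => (g ^ k) p

/-- `A` is an infinite orbit of `g`. -/
def IsInfOrbit {n : ℕ} (g : Equiv.Perm (X n)) (A : Set (X n)) : Prop :=
  (∃ p : X n, A = orbit g p) ∧ A.Infinite

/-- The generating relation of `∼_g`: some infinite orbit of `g` is almost equal
to `X_{i,r}(g) ∪ X_{j,s}(g)`. -/
def BaseRel {n : ℕ} (g : Equiv.Perm (X n)) (t : Fin n → ℤ) (i j : Fin n) : Prop :=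
  ∃ r s : ℕ, r < (t i).natAbs ∧ s < (t j).natAbs ∧
    ∃ A : Set (X n), IsInfOrbit g A ∧ AlmostEq A (Xir i t r ∪ Xir j t s)

/-- The equivalence relation `∼_g` on the rays, generated by `BaseRel`. -/
def SimRel {n : ℕ} (g : Equiv.Perm (X n)) (t : Fin n → ℤ) : Fin n → Fin n → Prop :=
  Relation.EqvGen (BaseRel g t)

def genFun {n : ℕ} [NeZero n] (i : Fin n) : X n → X n :=
  fun p =>
    if p.1 = 0 then ((0 : Fin n), p.2 + 1)
    else if p.1 = i then (if p.2 = 0 then ((0 : Fin n), 0) else (i, p.2 - 1))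
    else p

def genInvFun {n : ℕ} [NeZero n] (i : Fin n) : X n → X n :=
  fun p =>
    if p.1 = 0 then (if p.2 = 0 then (i, 0) else ((0 : Fin n), p.2 - 1))
    else if p.1 = i then (i, p.2 + 1)
    else p

/-- The generator `g_i` of Houghton's group (ray `1` of the paper is ray `0` here). -/
def gen {n : ℕ} [NeZero n] (i : Fin n) (hi : i ≠ 0) : Equiv.Perm (X n) where
  toFun := genFun i
  invFun := genInvFun i
  left_inv := by
    rintro ⟨j, m⟩
    by_cases hj : j = 0
    · subst hj
      simp [genFun, genInvFun]
    · by_cases hji : j = i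
      · subst hji
        rcases Nat.eq_zero_or_pos m with hm | hm
        · subst hm; simp [genFun, genInvFun, hi]
        · simp [genFun, genInvFun, hi, hm.ne', Nat.sub_add_cancel hm]
      · simp [genFun, genInvFun, hj, hji]
  right_inv := by
    rintro ⟨j, m⟩
    by_cases hj : j = 0
    · subst hj
      rcases Nat.eq_zero_or_pos m with hm | hm
      · subst hm; simp [genFun, genInvFun, hi]
      · simp [genFun, genInvFun, hm.ne', hi.symm, Nat.sub_add_cancel hm]
    · by_cases hji : j = i
      · subst hji
        simp [genFun, genInvFun, hj]
      · simp [genFun, genInvFun, hj, hji]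

/-- The transposition `τ` exchanging `(1,0)` and `(2,0)` (here `(0,0)` and `(1,0)`). -/
def tau (n : ℕ) [NeZero n] : Equiv.Perm (X n) :=
  Equiv.swap ((0 : Fin n), 0) ((1 : Fin n), 0)

/-- Letters of the alphabet `{g_2,…,g_n}^{±1}`. -/
abbrev Letter (n : ℕ) [NeZero n] := {i : Fin n // i ≠ 0} × Bool

/-- Words over `{g_2,…,g_n}^{±1}`. -/
abbrev Word (n : ℕ) [NeZero n] := List (Letter n)

def evalLetter {n : ℕ} [NeZero n] (l : Letter n) : Equiv.Perm (X n) :=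
  if l.2 then gen l.1.1 l.1.2 else (gen l.1.1 l.1.2)⁻¹

/-- The element of `Sym(X_n)` represented by a word. -/
def wordProd {n : ℕ} [NeZero n] (w : Word n) : Equiv.Perm (X n) :=
  (w.map evalLetter).prod

/-!
Conjugation by `x` turns every infinite orbit `A` of `g` into the infinite orbit `x⁻¹ A` of
`h = x⁻¹ g x`, and `t(h) = t(g)`. Far out on ray `i`, `x` translates by `t_i(x)`, a multiple
of `|t_i(g)|`, so it preserves residues mod `|t_i(g)|` and hence every `X_{i,r}(g)` up to a
finite set. Thus `A ≈ X_{i,r} ∪ X_{j,s}` forces `x⁻¹ A ≈ X_{i,r} ∪ X_{j,s}`, and the same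
argument for `x⁻¹` gives the converse.
-/

theorem natAbs_le_sum_natAbs {ι : Type*} [Fintype ι] (t : ι → ℤ) (i : ι) :
    (t i).natAbs ≤ ∑ j, (t j).natAbs :=
  Finset.single_le_sum (f := fun j => (t j).natAbs) (fun _ _ => Nat.zero_le _)
    (Finset.mem_univ i)

namespace EvTrans

variable {n : ℕ} {g x : Equiv.Perm (X n)} {tg tx : Fin n → ℤ}

theorem unique {t t' : Fin n → ℤ} (h : EvTrans g t) (h' : EvTrans g t') : t = t' := by
  obtain ⟨z, hz⟩ := h
  obtain ⟨z', hz'⟩ := h'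
  funext i
  have := (hz i (max z z') (le_max_left _ _)).2
  have := (hz' i (max z z') (le_max_right _ _)).2
  omega

/-- Past `za + zb + ∑ |tb i|`, `b` translates and lands at height at least `za`, where `a`
translates too. -/
theorem mul {a b : Equiv.Perm (X n)} {ta tb : Fin n → ℤ} (ha : EvTrans a ta)
    (hb : EvTrans b tb) : EvTrans (a * b) (ta + tb) := by
  obtain ⟨za, hza⟩ := ha
  obtain ⟨zb, hzb⟩ := hb
  refine ⟨za + zb + ∑ i, (tb i).natAbs, fun i m hm => ?_⟩
  have hi := natAbs_le_sum_natAbs tb i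
  obtain ⟨hray, hshift⟩ := hzb i m (by omega)
  have hb_apply : b (i, m) = (i, (b (i, m)).2) := Prod.ext hray rfl
  obtain ⟨hray', hshift'⟩ := hza i (b (i, m)).2 (by omega)
  rw [Equiv.Perm.mul_apply, hb_apply]
  exact ⟨hray', by rw [hshift', Pi.add_apply]; omega⟩

theorem inv (hx : EvTrans x tx) : EvTrans x⁻¹ (-tx) := by
  obtain ⟨z, hz⟩ := hx
  refine ⟨z + ∑ i, (tx i).natAbs, fun i m hm => ?_⟩
  have hi := natAbs_le_sum_natAbs tx i
  obtain ⟨m', hm'⟩ : ∃ m' : ℕ, (m' : ℤ) = m - tx i := ⟨_, Int.toNat_of_nonneg (by omega)⟩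
  obtain ⟨hray, hshift⟩ := hz i m' (by omega)
  have hx_apply : x (i, m') = (i, m) := Prod.ext hray (by omega)
  rw [← hx_apply, ← Equiv.Perm.mul_apply, inv_mul_cancel, Equiv.Perm.one_apply]
  exact ⟨rfl, by rw [Pi.neg_apply]; omega⟩

theorem conj (hg : EvTrans g tg) (hx : EvTrans x tx) : EvTrans (x⁻¹ * g * x) tg := by
  simpa using (hx.inv.mul hg).mul hx

end EvTrans

section AlmostEq

variable {α β : Type*} {A B C D : Set α}

theorem AlmostEq.trans (h : AlmostEq A B) (h' : AlmostEq B C) : AlmostEq A C :=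
  (Set.Finite.union h h').subset (symmDiff_triangle A B C)

theorem AlmostEq.union (h : AlmostEq A B) (h' : AlmostEq C D) : AlmostEq (A ∪ C) (B ∪ D) :=
  (Set.Finite.union h h').subset Set.union_symmDiff_union_subset

theorem AlmostEq.preimage {f : β → α} (hf : Function.Injective f) (h : AlmostEq A B) :
    AlmostEq (f ⁻¹' A) (f ⁻¹' B) := by
  unfold AlmostEq
  rw [← Set.preimage_symmDiff]
  exact Set.Finite.preimage hf.injOn h

end AlmostEq

theorem finite_setOf_snd_lt {ι : Type*} [Finite ι] (z : ℕ) : {p : ι × ℕ | p.2 < z}.Finite :=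
  (Set.finite_univ.prod (Set.finite_Iio z)).subset fun _ hp => ⟨trivial, hp⟩

theorem almostEq_preimage_Xir {n : ℕ} {x : Equiv.Perm (X n)} {t tx : Fin n → ℤ}
    (hx : EvTrans x tx) {i : Fin n} (hdvd : t i ∣ tx i) (r : ℕ) :
    AlmostEq (x ⁻¹' Xir i t r) (Xir i t r) := by
  obtain ⟨z, hz⟩ := hx
  obtain ⟨c, hc⟩ := (abs_dvd (t i) (tx i)).mpr hdvd
  refine (finite_setOf_snd_lt z).subset fun ⟨j, m⟩ hp => ?_
  by_contra hm
  obtain ⟨hray, hshift⟩ := hz j m (not_lt.mp hm)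
  have hmem : x (j, m) ∈ Xir i t r ↔ (j, m) ∈ Xir i t r := by
    rcases eq_or_ne j i with rfl | hji
    · have hres : (x (j, m)).2 % (t j).natAbs = m % (t j).natAbs := by
        zify
        rw [hshift, hc, Int.add_mul_emod_self_left]
      simp only [Xir, Set.mem_ofPred_eq, hray, hres]
    · simp only [Xir, Set.mem_ofPred_eq, hray, hji, false_and]
  exact (Set.mem_symmDiff.mp hp).elim (fun h => h.2 (hmem.mp h.1)) fun h => h.2 (hmem.mpr h.1)

theorem orbit_conj {n : ℕ} (g x : Equiv.Perm (X n)) (p : X n) :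
    orbit (x⁻¹ * g * x) p = x ⁻¹' orbit g (x p) := by
  have hpow (k : ℤ) : (x⁻¹ * g * x) ^ k = x⁻¹ * g ^ k * x := by
    simpa using conj_zpow (a := x⁻¹) (b := g) (i := k)
  ext q
  simp only [orbit, hpow, Set.mem_range, Set.mem_preimage, Equiv.Perm.mul_apply,
    Equiv.Perm.inv_eq_iff_eq]

theorem IsInfOrbit.conj {n : ℕ} {g : Equiv.Perm (X n)} {A : Set (X n)} (hA : IsInfOrbit g A)
    (x : Equiv.Perm (X n)) : IsInfOrbit (x⁻¹ * g * x) (x ⁻¹' A) := by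
  obtain ⟨⟨p, rfl⟩, hinf⟩ := hA
  refine ⟨⟨x⁻¹ p, ?_⟩, hinf.preimage (by simp [x.surjective.range_eq])⟩
  rw [orbit_conj, ← Equiv.Perm.mul_apply, mul_inv_cancel, Equiv.Perm.one_apply]

theorem SimRel.conj {n : ℕ} {g x : Equiv.Perm (X n)} {t tx : Fin n → ℤ} (hx : EvTrans x tx)
    (hdvd : ∀ i, t i ≠ 0 → t i ∣ tx i) {i j : Fin n} (h : SimRel g t i j) :
    SimRel (x⁻¹ * g * x) t i j := by
  refine Relation.EqvGen.mono (fun i j hij => ?_) i j h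
  obtain ⟨r, s, hr, hs, A, hA, hAX⟩ := hij
  have hdvd_of_lt {k : Fin n} {q : ℕ} (hq : q < (t k).natAbs) : t k ∣ tx k :=
    hdvd k (Int.natAbs_pos.mp (q.zero_le.trans_lt hq))
  refine ⟨r, s, hr, hs, x ⁻¹' A, hA.conj x, ?_⟩
  exact (hAX.preimage x.injective).trans
    ((almostEq_preimage_Xir hx (hdvd_of_lt hr) r).union
      (almostEq_preimage_Xir hx (hdvd_of_lt hs) s))

end HoughtonPaper

open HoughtonPaper

theorem statement11_general (n : ℕ) (g h x : Equiv.Perm (X n))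
    (tg th tx : Fin n → ℤ) (hg : EvTrans g tg) (hh : EvTrans h th) (hx : EvTrans x tx)
    (hconj : x⁻¹ * g * x = h)
    (hmod : ∀ i : Fin n, tg i ≠ 0 → tg i ∣ tx i) :
    ∀ i j : Fin n, SimRel g tg i j ↔ SimRel h th i j := by
  subst hconj
  obtain rfl : tg = th := (hg.conj hx).unique hh
  have hmod_inv (i : Fin n) (hi : tg i ≠ 0) : tg i ∣ (-tx) i :=
    dvd_neg.mpr (hmod i hi)
  intro i j
  refine ⟨SimRel.conj hx hmod, fun hij => ?_⟩
  simpa [mul_assoc] using SimRel.conj hx.inv hmod_inv hij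

theorem statement11 (n : ℕ) (hn : 2 ≤ n) (g h x : Equiv.Perm (X n))
    (tg th tx : Fin n → ℤ) (hg : EvTrans g tg) (hh : EvTrans h th) (hx : EvTrans x tx)
    (hconj : x⁻¹ * g * x = h)
    (hmod : ∀ i : Fin n, tg i ≠ 0 → tg i ∣ tx i) :
    ∀ i j : Fin n, SimRel g tg i j ↔ SimRel h th i j :=
  statement11_general n g h x tg th tx hg hh hx hconj hmod
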